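/- Fix α ∈ (0, 1/2), K > 0, n > 0, and δ ∈ (0, α/2). Define, for a ∈ (1, ∞), g(a) := 1 - α/2 + δ + (1/2)exp(-n(1-1/a)²/(2K)) - Φ(√(n/a)), where Φ is the standard normal c.d.f. Then lim_{a→1⁺} g(a) > 0 and lim_{a→∞} g(a) > 0, and the set {a ∈ (1, ∞) : g(a) < 0} is an open interval (possibly empty); if nonempty it has the form (a₁, a₂) with 1 < a₁ and a₂ < ∞. -/

import Mathlib

open MeasureTheory

/-- The standard normal density. -/
noncomputable def gpdf (t : ℝ) : ℝ := (Real.sqrt (2 * Real.pi))⁻¹ * Real.exp (-(t ^ 2) / 2)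

/-- The standard normal c.d.f. `Φ`. -/
noncomputable def Phi (x : ℝ) : ℝ := ∫ t in Set.Iic x, gpdf t

open Real Set Filter Topology

/-!
On `(1, ∞)` the derivative of `g` is `phiPart - expPart`, so `g' < 0` exactly where `logRatio`,
which is `log (expPart / phiPart)` up to a constant, exceeds a fixed level. The derivative of
`logRatio` is `N(a) / a³` with `N` strictly decreasing, so `logRatio` is quasiconcave and
`{g' < 0}` is an interval. If `g` were negative at `u < v` but not in between, the mean value
theorem applied left of `u` (where `g` is positive near `1`), on `[u, w]` and on `[w, v]` would give
points where `g'` is negative, positive, negative in this order. Hence `{g < 0}` is an interval;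
it is open by continuity and bounded away from `1` and `∞` by the positive limits.
-/

theorem IsOpen.eq_Ioo_csInf_csSup {α : Type*} [ConditionallyCompleteLinearOrder α]
    [TopologicalSpace α] [OrderTopology α] [DenselyOrdered α] [NoMinOrder α] [NoMaxOrder α]
    {s : Set α} (ho : IsOpen s) (hc : s.OrdConnected) (hne : s.Nonempty) (hb : BddBelow s)
    (ha : BddAbove s) : s = Ioo (sInf s) (sSup s) := by
  refine subset_antisymm (fun x hx => ?_)
    (IsConnected.Ioo_csInf_csSup_subset ⟨hne, hc.isPreconnected⟩ hb ha)
  obtain ⟨y, hyx, hy⟩ := Filter.Eventually.exists_lt (ho.mem_nhds hx)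
  obtain ⟨z, hxz, hz⟩ := Filter.Eventually.exists_gt (ho.mem_nhds hx)
  exact ⟨(csInf_le hb hy).trans_lt hyx, hxz.trans_le (le_csSup ha hz)⟩

section MeanValue

variable {f f' : ℝ → ℝ}

theorem exists_mem_Ioo_hasDerivAt_neg {a b : ℝ} (hab : a < b)
    (hf : ∀ x ∈ Icc a b, HasDerivAt f (f' x) x) (hfab : f b < f a) :
    ∃ c ∈ Ioo a b, f' c < 0 := by
  obtain ⟨c, hc, hslope⟩ := exists_hasDerivAt_eq_slope f f' hab
    (fun x hx => (hf x hx).continuousAt.continuousWithinAt)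
    (fun x hx => hf x (Ioo_subset_Icc_self hx))
  exact ⟨c, hc, hslope ▸ div_neg_of_neg_of_pos (sub_neg.2 hfab) (sub_pos.2 hab)⟩

theorem exists_mem_Ioo_hasDerivAt_pos {a b : ℝ} (hab : a < b)
    (hf : ∀ x ∈ Icc a b, HasDerivAt f (f' x) x) (hfab : f a < f b) :
    ∃ c ∈ Ioo a b, 0 < f' c := by
  obtain ⟨c, hc, hneg⟩ := exists_mem_Ioo_hasDerivAt_neg (f := fun x => -f x) (f' := fun x => -f' x)
    hab (fun x hx => (hf x hx).neg) (neg_lt_neg hfab)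
  exact ⟨c, hc, neg_neg_iff_pos.1 hneg⟩

variable {s : Set ℝ}

theorem quasiconcaveOn_of_hasDerivAt (hs : s.OrdConnected)
    (hf : ∀ x ∈ s, HasDerivAt f (f' x) x)
    (hf' : ∀ x ∈ s, ∀ y ∈ s, x < y → f' x < 0 → f' y ≤ 0) : QuasiconcaveOn ℝ s f := by
  intro r
  refine convex_iff_ordConnected.2 ⟨fun x hx z hz y hy => ⟨hs.out hx.1 hz.1 hy, ?_⟩⟩
  by_contra! hfy
  have hxy : x < y := lt_of_le_of_ne hy.1 (by rintro rfl; linarith [hx.2])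
  have hyz : y < z := lt_of_le_of_ne hy.2 (by rintro rfl; linarith [hz.2])
  obtain ⟨c₁, hc₁, hneg⟩ := exists_mem_Ioo_hasDerivAt_neg hxy
    (fun t ht => hf t (hs.out hx.1 hz.1 ⟨ht.1, ht.2.trans hyz.le⟩)) (by linarith [hx.2])
  obtain ⟨c₂, hc₂, hpos⟩ := exists_mem_Ioo_hasDerivAt_pos hyz
    (fun t ht => hf t (hs.out hx.1 hz.1 ⟨hxy.le.trans ht.1, ht.2⟩)) (by linarith [hz.2])
  have := hf' c₁ (hs.out hx.1 hz.1 (Ioo_subset_Icc_self ⟨hc₁.1, hc₁.2.trans hyz⟩))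
    c₂ (hs.out hx.1 hz.1 (Ioo_subset_Icc_self ⟨hxy.trans hc₂.1, hc₂.2⟩))
    (hc₁.2.trans hc₂.1) hneg
  linarith

theorem ordConnected_setOf_neg_of_hasDerivAt (hs : s.OrdConnected)
    (hf : ∀ x ∈ s, HasDerivAt f (f' x) x) (hf' : {x ∈ s | f' x < 0}.OrdConnected)
    {x₀ : ℝ} (hx₀ : x₀ ∈ s) (hf₀ : 0 ≤ f x₀) (hleft : ∀ x ∈ s, f x < 0 → x₀ < x) :
    {x ∈ s | f x < 0}.OrdConnected := by
  refine ⟨fun u hu v hv w hw => ⟨hs.out hu.1 hv.1 hw, ?_⟩⟩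
  by_contra! hfw
  have huw : u < w := lt_of_le_of_ne hw.1 (by rintro rfl; linarith [hu.2])
  have hwv : w < v := lt_of_le_of_ne hw.2 (by rintro rfl; linarith [hv.2])
  have hfIcc : ∀ {a b}, a ∈ s → b ∈ s → ∀ x ∈ Icc a b, HasDerivAt f (f' x) x :=
    fun ha hb x hx => hf x (hs.out ha hb hx)
  obtain ⟨c₀, hc₀, hneg₀⟩ := exists_mem_Ioo_hasDerivAt_neg (hleft u hu.1 hu.2)
    (hfIcc hx₀ hu.1) (by linarith [hu.2])
  obtain ⟨c₁, hc₁, hpos⟩ := exists_mem_Ioo_hasDerivAt_pos huw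
    (hfIcc hu.1 (hs.out hu.1 hv.1 ⟨hw.1, hw.2⟩)) (by linarith [hu.2])
  obtain ⟨c₂, hc₂, hneg₂⟩ := exists_mem_Ioo_hasDerivAt_neg hwv
    (hfIcc (hs.out hu.1 hv.1 ⟨hw.1, hw.2⟩) hv.1) (by linarith [hv.2])
  have hc₀s : c₀ ∈ s := hs.out hx₀ hu.1 (Ioo_subset_Icc_self hc₀)
  have hc₂s : c₂ ∈ s := hs.out (hs.out hu.1 hv.1 ⟨hw.1, hw.2⟩) hv.1 (Ioo_subset_Icc_self hc₂)
  have := (hf'.out ⟨hc₀s, hneg₀⟩ ⟨hc₂s, hneg₂⟩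
    ⟨(hc₀.2.trans hc₁.1).le, (hc₁.2.trans hc₂.1).le⟩).2
  linarith

theorem setOf_neg_eq_empty_or_Ioo {a L M : ℝ} (hf : ∀ x ∈ Ioi a, HasDerivAt f (f' x) x)
    (hf' : {x ∈ Ioi a | f' x < 0}.OrdConnected) (hL : Tendsto f (𝓝[>] a) (𝓝 L)) (hL0 : 0 < L)
    (hM : Tendsto f atTop (𝓝 M)) (hM0 : 0 < M) :
    {x | a < x ∧ f x < 0} = ∅ ∨ ∃ a₁ a₂, a < a₁ ∧ {x | a < x ∧ f x < 0} = Ioo a₁ a₂ := by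
  set S := {x | a < x ∧ f x < 0}
  obtain ⟨ε, hε, hnear⟩ := (nhdsGT_basis a).eventually_iff.1
    (hL.eventually (eventually_gt_nhds hL0))
  obtain ⟨R, hfar⟩ := eventually_atTop.1 (hM.eventually (eventually_gt_nhds hM0))
  have hεS : ∀ x ∈ S, ε ≤ x := fun x hx =>
    not_lt.1 fun h => (hnear ⟨hx.1, h⟩ : 0 < f x).not_gt hx.2
  have hSR : ∀ x ∈ S, x ≤ R := fun x hx =>
    not_lt.1 fun h => (hfar x h.le).not_gt hx.2
  have hopen : IsOpen S := ContinuousOn.isOpen_inter_preimage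
    (fun x hx => (hf x hx).continuousAt.continuousWithinAt) isOpen_Ioi isOpen_Iio
  have hmid : (a + ε) / 2 ∈ Ioo a ε := ⟨by linarith, by linarith⟩
  have hconn : S.OrdConnected := ordConnected_setOf_neg_of_hasDerivAt ordConnected_Ioi hf hf'
    hmid.1 (hnear hmid).le fun x hx hfx => hmid.2.trans_le (hεS x ⟨hx, hfx⟩)
  rcases S.eq_empty_or_nonempty with hS | hne
  · exact Or.inl hS
  exact Or.inr ⟨sInf S, sSup S, hε.trans_le (le_csInf hne hεS),
    hopen.eq_Ioo_csInf_csSup hconn hne ⟨ε, hεS⟩ ⟨R, hSR⟩⟩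

end MeanValue

theorem gpdf_eq_gaussianPDFReal : gpdf = ProbabilityTheory.gaussianPDFReal 0 1 := by
  ext t
  simp [gpdf, ProbabilityTheory.gaussianPDFReal]

theorem gpdf_pos (t : ℝ) : 0 < gpdf t := by
  unfold gpdf; positivity

theorem continuous_gpdf : Continuous gpdf := by
  unfold gpdf; fun_prop

theorem integrable_gpdf : Integrable gpdf :=
  gpdf_eq_gaussianPDFReal ▸ ProbabilityTheory.integrable_gaussianPDFReal 0 1

theorem Phi_add_integral_Ioi (x : ℝ) : Phi x + ∫ t in Ioi x, gpdf t = 1 := by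
  rw [Phi, intervalIntegral.integral_Iic_add_Ioi integrable_gpdf.integrableOn
    integrable_gpdf.integrableOn, gpdf_eq_gaussianPDFReal]
  exact ProbabilityTheory.integral_gaussianPDFReal_eq_one 0 one_ne_zero

theorem Phi_lt_one (x : ℝ) : Phi x < 1 := by
  have htail : 0 < ∫ t in Ioi x, gpdf t := by
    rw [setIntegral_pos_iff_support_of_nonneg_ae
      (.of_forall fun t => (gpdf_pos t).le) integrable_gpdf.integrableOn,
      Function.support_eq_univ fun t => (gpdf_pos t).ne', univ_inter]
    simp
  linarith [Phi_add_integral_Ioi x]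

theorem Phi_zero : Phi 0 = 1 / 2 := by
  have hsymm : Phi 0 = ∫ t in Ioi 0, gpdf t := by
    unfold Phi
    have heven : ∀ t, gpdf (-t) = gpdf t := fun t => by simp [gpdf]
    simpa [heven] using integral_comp_neg_Iic 0 gpdf
  linarith [Phi_add_integral_Ioi 0]

theorem hasDerivAt_Phi (x : ℝ) : HasDerivAt Phi (gpdf x) x := by
  have hPhi : Phi = fun y => Phi 0 + ∫ t in (0 : ℝ)..y, gpdf t := by
    ext y
    rw [← intervalIntegral.integral_Iic_sub_Iic integrable_gpdf.integrableOn
      integrable_gpdf.integrableOn, Phi, Phi]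
    ring
  rw [hPhi]
  exact (intervalIntegral.integral_hasDerivAt_right (continuous_gpdf.intervalIntegrable _ _)
    (continuous_gpdf.stronglyMeasurableAtFilter _ _) continuous_gpdf.continuousAt).const_add _

noncomputable def feasibility (c n K a : ℝ) : ℝ :=
  c + rexp (-(n * (1 - 1 / a) ^ 2) / (2 * K)) / 2 - Phi (√(n / a))

noncomputable def phiPart (n a : ℝ) : ℝ := gpdf (√(n / a)) * √(n / a) / (2 * a)

noncomputable def expPart (n K a : ℝ) : ℝ :=
  rexp (-(n * (1 - 1 / a) ^ 2) / (2 * K)) * (n * (a - 1)) / (2 * K * a ^ 3)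

-- `log (expPart n K a / phiPart n a)` up to an additive constant
noncomputable def logRatio (n K a : ℝ) : ℝ :=
  log (a - 1) - 3 / 2 * log a - n * (1 - 1 / a) ^ 2 / (2 * K) + n / (2 * a)

noncomputable def logRatioDeriv (n K a : ℝ) : ℝ :=
  ((a - 1)⁻¹ + (3 - n) / 2 - (n / 2 + n / K) * (a - 1) - (a - 1) ^ 2 / 2) / a ^ 3

theorem hasDerivAt_one_sub_one_div_sq {a : ℝ} (ha : a ≠ 0) :
    HasDerivAt (fun y : ℝ => (1 - 1 / y) ^ 2) (2 * (1 - 1 / a) * (a ^ 2)⁻¹) a := by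
  simp only [one_div]
  exact (((hasDerivAt_inv ha).const_sub 1).fun_pow 2).congr_deriv (by push_cast; ring)

section Feasibility

variable {c n K : ℝ}

theorem hasDerivAt_feasibility (hn : 0 < n) {a : ℝ} (ha : 0 < a) :
    HasDerivAt (feasibility c n K) (phiPart n a - expPart n K a) a := by
  have hexp : HasDerivAt (fun y => rexp (-(n * (1 - 1 / y) ^ 2) / (2 * K)) / 2)
      (rexp (-(n * (1 - 1 / a) ^ 2) / (2 * K)) * (-(n * (2 * (1 - 1 / a) * (a ^ 2)⁻¹)) / (2 * K))
        / 2) a :=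
    (((hasDerivAt_one_sub_one_div_sq ha.ne').const_mul n).neg.div_const (2 * K)).exp.div_const 2
  have hdiv : HasDerivAt (fun y : ℝ => n / y) (n * -(a ^ 2)⁻¹) a := by
    simpa only [div_eq_mul_inv] using (hasDerivAt_inv ha.ne').const_mul n
  have hPhi : HasDerivAt (fun y => Phi (√(n / y)))
      (gpdf (√(n / a)) * (1 / (2 * √(n / a)) * (n * -(a ^ 2)⁻¹))) a :=
    (hasDerivAt_Phi _).comp a ((Real.hasDerivAt_sqrt (div_pos hn ha).ne').comp a hdiv)
  refine ((hexp.const_add c).sub hPhi).congr_deriv ?_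
  have hs : √(n / a) ^ 2 * a = n := by
    rw [Real.sq_sqrt (div_pos hn ha).le, div_mul_cancel₀ n ha.ne']
  have hs0 : √(n / a) ≠ 0 := (Real.sqrt_pos.2 (div_pos hn ha)).ne'
  unfold phiPart expPart
  field_simp
  linear_combination (-a * gpdf √(n / a)) * hs

theorem phiPart_pos (hn : 0 < n) {a : ℝ} (ha : 0 < a) : 0 < phiPart n a := by
  have := gpdf_pos √(n / a)
  have := Real.sqrt_pos.2 (div_pos hn ha)
  unfold phiPart; positivity

theorem expPart_pos (hn : 0 < n) (hK : 0 < K) {a : ℝ} (ha : 1 < a) : 0 < expPart n K a := by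
  have : 0 < a - 1 := sub_pos.2 ha
  unfold expPart; positivity

theorem log_phiPart (hn : 0 < n) {a : ℝ} (ha : 0 < a) :
    log (phiPart n a) = -log √(2 * π) - n / (2 * a) + (log n - log a) / 2 - log 2 - log a := by
  have hs := Real.sqrt_pos.2 (div_pos hn ha)
  rw [phiPart, gpdf, log_div (by positivity) (by positivity), log_mul (by positivity) hs.ne',
    log_mul (by positivity) (by positivity), log_inv, log_exp, Real.sq_sqrt (div_pos hn ha).le,
    Real.log_sqrt (div_pos hn ha).le, log_div hn.ne' ha.ne', log_mul two_ne_zero ha.ne']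
  ring

theorem log_expPart (hn : 0 < n) (hK : 0 < K) {a : ℝ} (ha : 1 < a) :
    log (expPart n K a) = -(n * (1 - 1 / a) ^ 2) / (2 * K) + log n + log (a - 1)
      - log (2 * K) - 3 * log a := by
  have ha0 : 0 < a := one_pos.trans ha
  have ha1 : 0 < a - 1 := sub_pos.2 ha
  rw [expPart, log_div (by positivity) (by positivity), log_mul (by positivity) (by positivity),
    log_exp, log_mul hn.ne' ha1.ne', log_mul (by positivity) (by positivity), log_pow]
  push_cast
  ring

theorem exists_log_expPart_sub_log_phiPart (hn : 0 < n) (hK : 0 < K) :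
    ∃ κ, ∀ a, 1 < a → log (expPart n K a) - log (phiPart n a) = logRatio n K a + κ := by
  refine ⟨log n / 2 - log (2 * K) + log (2 * √(2 * π)), fun a ha => ?_⟩
  rw [log_expPart hn hK ha, log_phiPart hn (one_pos.trans ha), logRatio,
    log_mul (x := 2) (y := √(2 * π)) two_ne_zero (by positivity)]
  ring

theorem hasDerivAt_logRatio {a : ℝ} (ha : 1 < a) :
    HasDerivAt (logRatio n K) (logRatioDeriv n K a) a := by
  have ha0 : a ≠ 0 := (one_pos.trans ha).ne'
  have ha1 : a - 1 ≠ 0 := (sub_pos.2 ha).ne'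
  have hlog1 : HasDerivAt (fun y => log (y - 1)) ((a - 1)⁻¹) a := by
    simpa using ((hasDerivAt_id a).sub_const 1).log ha1
  have hrec := (hasDerivAt_const a n).div ((hasDerivAt_id' a).const_mul 2) (by positivity)
  refine (((hlog1.sub ((hasDerivAt_log ha0).const_mul (3 / 2))).sub
    (((hasDerivAt_one_sub_one_div_sq ha0).const_mul n).div_const (2 * K))).add hrec).congr_deriv ?_
  unfold logRatioDeriv
  field_simp
  ring

theorem logRatioDeriv_neg_of_lt (hn : 0 < n) (hK : 0 < K) {x y : ℝ} (hx : 1 < x) (hxy : x < y)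
    (h : logRatioDeriv n K x < 0) : logRatioDeriv n K y < 0 := by
  have hx0 : 0 < x - 1 := sub_pos.2 hx
  have hy0 : 0 < y := by linarith
  have hnum : (x - 1)⁻¹ + (3 - n) / 2 - (n / 2 + n / K) * (x - 1) - (x - 1) ^ 2 / 2 < 0 := by
    have := (div_lt_iff₀ (by positivity : (0 : ℝ) < x ^ 3)).1 h
    rwa [zero_mul] at this
  have h₁ : (y - 1)⁻¹ < (x - 1)⁻¹ := by gcongr
  have h₂ : (n / 2 + n / K) * (x - 1) ≤ (n / 2 + n / K) * (y - 1) := by gcongr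
  have h₃ : (x - 1) ^ 2 < (y - 1) ^ 2 := by gcongr
  exact div_neg_of_neg_of_pos (by linarith) (by positivity)

theorem quasiconcaveOn_logRatio (hn : 0 < n) (hK : 0 < K) :
    QuasiconcaveOn ℝ (Ioi 1) (logRatio n K) :=
  quasiconcaveOn_of_hasDerivAt ordConnected_Ioi (fun _ hx => hasDerivAt_logRatio hx)
    fun _ hx _ _ hxy h => (logRatioDeriv_neg_of_lt hn hK hx hxy h).le

theorem ordConnected_setOf_phiPart_sub_expPart_neg (hn : 0 < n) (hK : 0 < K) :
    {a ∈ Ioi 1 | phiPart n a - expPart n K a < 0}.OrdConnected := by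
  obtain ⟨κ, hκ⟩ := exists_log_expPart_sub_log_phiPart hn hK
  have hset : {a ∈ Ioi 1 | phiPart n a - expPart n K a < 0} =
      {a ∈ Ioi 1 | -κ < logRatio n K a} := by
    ext a
    simp only [mem_ofPred_eq, mem_Ioi, and_congr_right_iff]
    intro ha
    rw [sub_neg, ← log_lt_log_iff (phiPart_pos hn (one_pos.trans ha)) (expPart_pos hn hK ha),
      ← sub_pos, hκ a ha, neg_lt_iff_pos_add]
  rw [hset]
  exact ((quasiconcaveOn_logRatio hn hK).convex_gt _).ordConnected

theorem tendsto_feasibility_nhdsGT_one (hn : 0 < n) :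
    Tendsto (feasibility c n K) (𝓝[>] 1) (𝓝 (c + 1 / 2 - Phi √n)) := by
  have hval : feasibility c n K 1 = c + 1 / 2 - Phi √n := by norm_num [feasibility]
  exact hval ▸ (hasDerivAt_feasibility hn one_pos).continuousAt.continuousWithinAt

theorem tendsto_feasibility_atTop :
    Tendsto (feasibility c n K) atTop (𝓝 (c + rexp (-n / (2 * K)) / 2 - 1 / 2)) := by
  have hinv : Tendsto (fun a : ℝ => 1 / a) atTop (𝓝 0) := by
    simpa only [one_div] using tendsto_inv_atTop_zero
  have hexp : Tendsto (fun a : ℝ => rexp (-(n * (1 - 1 / a) ^ 2) / (2 * K)) / 2) atTop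
      (𝓝 (rexp (-n / (2 * K)) / 2)) := by
    have := (((tendsto_const_nhds (x := (1 : ℝ)).sub hinv).pow 2).const_mul n).neg.div_const
      (2 * K) |>.rexp.div_const 2
    simpa using this
  have hPhi : Tendsto (fun a : ℝ => Phi √(n / a)) atTop (𝓝 (1 / 2)) := by
    have hsqrt : Tendsto (fun a : ℝ => √(n / a)) atTop (𝓝 0) := by
      simpa [Function.comp_def] using
        (Real.continuous_sqrt.tendsto 0).comp (tendsto_const_nhds.div_atTop tendsto_id)
    have := (hasDerivAt_Phi 0).continuousAt.tendsto.comp hsqrt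
    rwa [Phi_zero] at this
  exact (tendsto_const_nhds.add hexp).sub hPhi

end Feasibility

/-- The feasibility function
`g(a) = 1 - α/2 + δ + exp(-n(1-1/a)²/(2K))/2 - Φ(√(n/a))` has strictly positive limits
as `a → 1⁺` and `a → ∞`, and its sublevel set `{a ∈ (1,∞) : g(a) < 0}` is an open
interval `(a₁, a₂)` with `1 < a₁` (possibly empty). -/
theorem stmt_15 (α K n δ : ℝ) (hα : α ∈ Set.Ioo (0 : ℝ) (1 / 2)) (hK : 0 < K)
    (hn : 0 < n) (hδ : δ ∈ Set.Ioo (0 : ℝ) (α / 2))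
    (g : ℝ → ℝ)
    (hg : g = fun a =>
      1 - α / 2 + δ + Real.exp (-(n * (1 - 1 / a) ^ 2) / (2 * K)) / 2
        - Phi (Real.sqrt (n / a))) :
    (∃ L, 0 < L ∧ Filter.Tendsto g (nhdsWithin 1 (Set.Ioi 1)) (nhds L)) ∧
    (∃ M, 0 < M ∧ Filter.Tendsto g Filter.atTop (nhds M)) ∧
    ({a : ℝ | 1 < a ∧ g a < 0} = ∅ ∨
      ∃ a₁ a₂ : ℝ, 1 < a₁ ∧ {a : ℝ | 1 < a ∧ g a < 0} = Set.Ioo a₁ a₂) := by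
  obtain rfl : g = feasibility (1 - α / 2 + δ) n K := hg
  have hL0 : 0 < 1 - α / 2 + δ + 1 / 2 - Phi √n := by
    linarith [hα.2, hδ.1, Phi_lt_one √n]
  have hM0 : 0 < 1 - α / 2 + δ + rexp (-n / (2 * K)) / 2 - 1 / 2 := by
    linarith [hα.2, hδ.1, exp_pos (-n / (2 * K))]
  have hL := tendsto_feasibility_nhdsGT_one (c := 1 - α / 2 + δ) (K := K) hn
  have hM := tendsto_feasibility_atTop (c := 1 - α / 2 + δ) (n := n) (K := K)
  exact ⟨⟨_, hL0, hL⟩, ⟨_, hM0, hM⟩, setOf_neg_eq_empty_or_Ioo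
    (fun a ha => hasDerivAt_feasibility hn (one_pos.trans ha))
    (ordConnected_setOf_phiPart_sub_expPart_neg hn hK) hL hL0 hM hM0⟩
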